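/- arXiv:1006.1175 — 5 statements merged into one kernel-verified Lean document; each statement's English description precedes it below -/
import Mathlib

section
/- Let $p$ be an asymmetric seminorm on a real vector space $X$ and define $p^\diamond(x) = \inf\{p(x') + p(x'-x) : x' \in X\}$. Then $p^\diamond$ is a (symmetric) seminorm on $X$ satisfying $p^\diamond \leq p$. -/
open Pointwise


theorem stmt_0 {X : Type*} [AddCommGroup X] [Module ℝ X] (p : X → ℝ)
    (hnn : ∀ x, 0 ≤ p x)
    (hhom : ∀ (a : ℝ) (x : X), 0 ≤ a → p (a • x) = a * p x)
    (hsub : ∀ x y, p (x + y) ≤ p x + p y) :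
    let pd : X → ℝ := fun x => sInf {t | ∃ x', t = p x' + p (x' - x)}
    (∀ x, 0 ≤ pd x) ∧ (∀ x, pd (-x) = pd x) ∧
    (∀ (a : ℝ) (x : X), 0 ≤ a → pd (a • x) = a * pd x) ∧
    (∀ x y, pd (x + y) ≤ pd x + pd y) ∧ (∀ x, pd x ≤ p x) := by
  intro pd
  have hp0 : p 0 = 0 := by
    have := hhom 0 0 le_rfl
    simpa using this
  set S : X → Set ℝ := fun x => {t | ∃ x', t = p x' + p (x' - x)} with hS
  have hne : ∀ x, (S x).Nonempty := fun x => ⟨p x + p (x - x), x, rfl⟩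
  have hlb : ∀ x, ∀ t ∈ S x, (0:ℝ) ≤ t := by
    rintro x t ⟨x', rfl⟩
    exact add_nonneg (hnn _) (hnn _)
  have hbdd : ∀ x, BddBelow (S x) := fun x => ⟨0, fun t ht => hlb x t ht⟩
  have hnn' : ∀ x, 0 ≤ pd x := fun x => le_csInf (hne x) (hlb x)
  have hle : ∀ x, pd x ≤ p x := by
    intro x
    have hmem : p x + p (x - x) ∈ S x := ⟨x, rfl⟩
    have := csInf_le (hbdd x) hmem
    simpa [sub_self, hp0] using this
  have hpd0 : pd 0 = 0 := by
    have h1 : pd 0 ≤ p 0 := hle 0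
    have h2 : 0 ≤ pd 0 := hnn' 0
    linarith [hp0 ▸ h1]
  refine ⟨hnn', ?_, ?_, ?_, hle⟩
  · -- symmetry
    intro x
    have hset : S (-x) = S x := by
      ext t
      constructor
      · rintro ⟨y, rfl⟩
        exact ⟨y + x, by rw [add_sub_cancel_right, sub_neg_eq_add, add_comm]⟩
      · rintro ⟨y, rfl⟩
        exact ⟨y - x, by rw [sub_neg_eq_add, sub_add_cancel, add_comm]⟩
    exact congrArg sInf hset
  · -- homogeneity
    intro a x ha
    rcases ha.eq_or_lt with rfl | ha
    · simp [zero_smul, hpd0]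
    · have hset : S (a • x) = a • S x := by
        ext t
        constructor
        · rintro ⟨y, rfl⟩
          refine ⟨p (a⁻¹ • y) + p (a⁻¹ • y - x), ⟨a⁻¹ • y, rfl⟩, ?_⟩
          have h1 : a • (a⁻¹ • y) = y := by
            rw [smul_smul, mul_inv_cancel₀ ha.ne', one_smul]
          have h2 : a • (a⁻¹ • y - x) = y - a • x := by
            rw [smul_sub, h1]
          show a * _ = _
          rw [mul_add, ← hhom a _ ha.le, ← hhom a _ ha.le, h1, h2]
        · rintro ⟨t, ⟨y, rfl⟩, rfl⟩
          refine ⟨a • y, ?_⟩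
          show a * (p y + p (y - x)) = _
          rw [mul_add, ← hhom a _ ha.le, ← hhom a _ ha.le, smul_sub]
      have heq : pd (a • x) = sInf (a • S x) := congrArg sInf hset
      rw [heq, Real.sInf_smul_of_nonneg ha.le (S x), smul_eq_mul]
  · -- subadditivity
    intro x y
    have key : ∀ a ∈ S x, ∀ b ∈ S y, pd (x + y) ≤ a + b := by
      rintro a ⟨u, rfl⟩ b ⟨v, rfl⟩
      have hmem : p (u + v) + p (u + v - (x + y)) ∈ S (x + y) := ⟨u + v, rfl⟩
      have h1 : pd (x + y) ≤ p (u + v) + p (u + v - (x + y)) := csInf_le (hbdd _) hmem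
      have h2 : p (u + v) ≤ p u + p v := hsub u v
      have h3 : p (u + v - (x + y)) ≤ p (u - x) + p (v - y) := by
        have : u + v - (x + y) = (u - x) + (v - y) := by abel
        rw [this]; exact hsub _ _
      linarith
    have h1 : ∀ a ∈ S x, pd (x + y) - a ≤ pd y := by
      intro a ha
      refine le_csInf (hne y) fun b hb => ?_
      linarith [key a ha b hb]
    have h2 : pd (x + y) - pd y ≤ pd x := by
      refine le_csInf (hne x) fun a ha => ?_
      linarith [h1 a ha]
    linarith
end

section
/- Let $p$ be an asymmetric seminorm on a real vector space $X$ and $p^\diamond(x) = \inf\{p(x') + p(x'-x) : x' \in X\}$. Then $p^\diamond$ is the greatest seminorm on $X$ majorized by $p$: if $q$ is any seminorm with $q \leq p$, then $q \leq p^\diamond$. -/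
theorem stmt_1 {X : Type*} [AddCommGroup X] [Module ℝ X] (p : X → ℝ)
    (hnn : ∀ x, 0 ≤ p x)
    (hhom : ∀ (a : ℝ) (x : X), 0 ≤ a → p (a • x) = a * p x)
    (hsub : ∀ x y, p (x + y) ≤ p x + p y)
    (q : X → ℝ)
    (hqnn : ∀ x, 0 ≤ q x)
    (hqsym : ∀ x, q (-x) = q x)
    (hqhom : ∀ (a : ℝ) (x : X), 0 ≤ a → q (a • x) = a * q x)
    (hqsub : ∀ x y, q (x + y) ≤ q x + q y)
    (hle : ∀ x, q x ≤ p x) :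
    ∀ x, q x ≤ sInf {t | ∃ x', t = p x' + p (x' - x)} := by
  intro x
  refine le_csInf ⟨p x + p (x - x), x, rfl⟩ ?_
  rintro t ⟨x', rfl⟩
  have h1 : q x ≤ q x' + q (x - x') := by
    have := hqsub x' (x - x'); simpa using this
  have h2 : q (x - x') = q (x' - x) := by
    rw [← hqsym]; simp
  calc q x ≤ q x' + q (x' - x) := by rw [← h2]; exact h1
    _ ≤ p x' + p (x' - x) := add_le_add (hle _) (hle _)
end

section
/- Let $(X,p)$ be an asymmetric seminormed space. The topology $\tau_p$ generated by $p$ is Hausdorff if and only if $p^\diamond(x) > 0$ for every $x \neq 0$, where $p^\diamond(x) = \inf\{p(x') + p(x'-x) : x' \in X\}$. -/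
def qball {X : Type*} (ρ : X → X → ℝ) (x : X) (r : ℝ) : Set X := {y | ρ x y < r}

def qtop {X : Type*} (ρ : X → X → ℝ) : TopologicalSpace X :=
  TopologicalSpace.generateFrom {B | ∃ x r, 0 < r ∧ B = qball ρ x r}

theorem stmt_2 {X : Type*} [AddCommGroup X] [Module ℝ X] (p : X → ℝ)
    (hnn : ∀ x, 0 ≤ p x)
    (hhom : ∀ (a : ℝ) (x : X), 0 ≤ a → p (a • x) = a * p x)
    (hsub : ∀ x y, p (x + y) ≤ p x + p y) :
    @T2Space X (qtop fun x y => p (y - x)) ↔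
      ∀ x : X, x ≠ 0 → 0 < sInf {t | ∃ x', t = p x' + p (x' - x)} := by
  have hp0 : p 0 = 0 := by
    have := hhom 0 0 le_rfl
    simpa using this
  set ρ : X → X → ℝ := fun x y => p (y - x) with hρ
  have htri : ∀ x y z : X, ρ x z ≤ ρ x y + ρ y z := by
    intro x y z
    have := hsub (y - x) (z - y)
    simpa [hρ, show y - x + (z - y) = z - x by abel] using this
  have hself : ∀ x : X, ρ x x = 0 := by intro x; simp [hρ, hp0]
  letI t : TopologicalSpace X := qtop ρ
  have hbasis : TopologicalSpace.IsTopologicalBasis (α := X)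
      {B | ∃ x r, 0 < r ∧ B = qball ρ x r} := by
    refine ⟨?_, ?_, rfl⟩
    · rintro B1 ⟨x1, r1, hr1, rfl⟩ B2 ⟨x2, r2, hr2, rfl⟩ y ⟨hy1, hy2⟩
      have h1 : ρ x1 y < r1 := hy1
      have h2 : ρ x2 y < r2 := hy2
      refine ⟨qball ρ y (min (r1 - ρ x1 y) (r2 - ρ x2 y)),
        ⟨y, _, by simp [h1, h2], rfl⟩, ?_, ?_⟩
      · show ρ y y < _
        rw [hself]; simp [h1, h2]
      · rintro z hz
        have hz' : ρ y z < min (r1 - ρ x1 y) (r2 - ρ x2 y) := hz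
        constructor
        · have := htri x1 y z
          have : ρ x1 z < r1 := by
            have h := lt_of_lt_of_le hz' (min_le_left _ _)
            linarith [htri x1 y z]
          exact this
        · have : ρ x2 z < r2 := by
            have h := lt_of_lt_of_le hz' (min_le_right _ _)
            linarith [htri x2 y z]
          exact this
    · ext y
      simp only [Set.mem_sUnion, Set.mem_univ, iff_true]
      exact ⟨qball ρ y 1, ⟨y, 1, one_pos, rfl⟩, by show ρ y y < 1; rw [hself]; norm_num⟩
  have hopen : ∀ (x : X) (r : ℝ), 0 < r → IsOpen (qball ρ x r) := by
    intro x r hr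
    exact TopologicalSpace.GenerateOpen.basic _ ⟨x, r, hr, rfl⟩
  constructor
  · intro ht2 x hx
    have hsep := @t2_separation X t ht2 0 x (Ne.symm hx)
    obtain ⟨U, V, hU, hV, h0U, hxV, hdisj⟩ := hsep
    have hU' : U ∈ @nhds X t 0 := hU.mem_nhds h0U
    have hV' : V ∈ @nhds X t x := hV.mem_nhds hxV
    rw [hbasis.mem_nhds_iff] at hU' hV'
    obtain ⟨B1, ⟨z1, r1, hr1, rfl⟩, h01, hB1⟩ := hU'
    obtain ⟨B2, ⟨z2, r2, hr2, rfl⟩, hx2, hB2⟩ := hV'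
    have h01' : ρ z1 0 < r1 := h01
    have hx2' : ρ z2 x < r2 := hx2
    set ε := min (r1 - ρ z1 0) (r2 - ρ z2 x) with hε
    have hεpos : 0 < ε := by simp [hε]; constructor <;> linarith
    refine lt_of_lt_of_le hεpos (le_csInf ⟨p 0 + p (0 - x), 0, rfl⟩ ?_)
    rintro t' ⟨x', rfl⟩
    by_contra hlt
    push_neg at hlt
    have hp1 : p x' < ε := lt_of_le_of_lt (by linarith [hnn (x' - x)]) hlt
    have hp2 : p (x' - x) < ε := lt_of_le_of_lt (by linarith [hnn x']) hlt
    have hx'U : x' ∈ U := by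
      apply hB1
      show ρ z1 x' < r1
      have := htri z1 0 x'
      have h2 : ρ (0 : X) x' = p x' := by simp [hρ]
      have h3 : ε ≤ r1 - ρ z1 0 := min_le_left _ _
      linarith
    have hx'V : x' ∈ V := by
      apply hB2
      show ρ z2 x' < r2
      have := htri z2 x x'
      have h2 : ρ x x' = p (x' - x) := rfl
      have h3 : ε ≤ r2 - ρ z2 x := min_le_right _ _
      linarith
    exact Set.disjoint_left.mp hdisj hx'U hx'V
  · intro hpos
    refine @T2Space.mk X t ?_
    intro u v huv
    set x := v - u with hxdef
    have hx : x ≠ 0 := sub_ne_zero.mpr (Ne.symm huv)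
    have hc := hpos x hx
    set c := sInf {t | ∃ x', t = p x' + p (x' - x)} with hcdef
    refine ⟨qball ρ u (c / 2), qball ρ v (c / 2), hopen _ _ (by linarith),
      hopen _ _ (by linarith), ?_, ?_, ?_⟩
    · show ρ u u < c / 2; rw [hself]; linarith
    · show ρ v v < c / 2; rw [hself]; linarith
    · rw [Set.disjoint_left]
      intro y hy1 hy2
      have h1 : p (y - u) < c / 2 := hy1
      have h2 : p (y - v) < c / 2 := hy2
      have hmem : p (y - u) + p (y - u - x) ∈ {t | ∃ x', t = p x' + p (x' - x)} :=
        ⟨y - u, rfl⟩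
      have hbdd : BddBelow {t | ∃ x', t = p x' + p (x' - x)} := by
        refine ⟨0, ?_⟩
        rintro t' ⟨x', rfl⟩
        exact add_nonneg (hnn _) (hnn _)
      have hle := csInf_le hbdd hmem
      have heq : y - u - x = y - v := by rw [hxdef]; abel
      rw [heq] at hle
      linarith
end

section
/- Every quasi-semimetric space $(X,\rho)$ is pairwise normal as a bitopological space: if $A$ is $\tau(\rho)$-closed, $B$ is $\tau(\bar\rho)$-closed, and $A \cap B = \emptyset$, then there exist a $\tau(\bar\rho)$-open set $U \supset A$ and a $\tau(\rho)$-open set $V \supset B$ with $U \cap V = \emptyset$. -/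
lemma qball_open {X : Type*} (ρ : X → X → ℝ) (x : X) {r : ℝ} (hr : 0 < r) :
    @IsOpen X (qtop ρ) (qball ρ x r) :=
  TopologicalSpace.GenerateOpen.basic _ ⟨x, r, hr, rfl⟩

lemma mem_open_qball {X : Type*} (ρ : X → X → ℝ)
    (htri : ∀ x y z, ρ x z ≤ ρ x y + ρ y z)
    {s : Set X} (hs : @IsOpen X (qtop ρ) s) :
    ∀ x ∈ s, ∃ r > 0, qball ρ x r ⊆ s := by
  induction hs with
  | basic t ht =>
    obtain ⟨y, r, hr, rfl⟩ := ht
    intro x hx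
    refine ⟨r - ρ y x, by simpa [qball] using hx, fun z hz => ?_⟩
    simp only [qball, Set.mem_setOf_eq] at *
    calc ρ y z ≤ ρ y x + ρ x z := htri y x z
      _ < r := by linarith
  | univ => exact fun x _ => ⟨1, one_pos, fun z _ => trivial⟩
  | inter t u _ _ iht ihu =>
    intro x hx
    obtain ⟨r, hr, hrs⟩ := iht x hx.1
    obtain ⟨r', hr', hrs'⟩ := ihu x hx.2
    refine ⟨min r r', lt_min hr hr', fun z hz => ?_⟩
    simp only [qball, Set.mem_setOf_eq, lt_min_iff] at hz
    exact ⟨hrs hz.1, hrs' hz.2⟩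
  | sUnion S _ ih =>
    intro x hx
    obtain ⟨t, htS, hxt⟩ := hx
    obtain ⟨r, hr, hrs⟩ := ih t htS x hxt
    exact ⟨r, hr, fun z hz => ⟨t, htS, hrs hz⟩⟩

theorem stmt_4 {X : Type*} (ρ : X → X → ℝ)
    (hnn : ∀ x y, 0 ≤ ρ x y) (hzero : ∀ x, ρ x x = 0)
    (htri : ∀ x y z, ρ x z ≤ ρ x y + ρ y z)
    (A B : Set X)
    (hA : @IsClosed X (qtop ρ) A)
    (hB : @IsClosed X (qtop fun a b => ρ b a) B)
    (hAB : A ∩ B = ∅) :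
    ∃ U V : Set X, @IsOpen X (qtop fun a b => ρ b a) U ∧ @IsOpen X (qtop ρ) V ∧
      A ⊆ U ∧ B ⊆ V ∧ U ∩ V = ∅ := by
  set ρ' : X → X → ℝ := fun a b => ρ b a with hρ'
  have htri' : ∀ x y z, ρ' x z ≤ ρ' x y + ρ' y z := fun x y z => by
    simpa [hρ', add_comm] using htri z y x
  -- for each a ∈ A, a ball in ρ' missing B
  have hAball : ∀ a ∈ A, ∃ r > 0, qball ρ' a r ⊆ Bᶜ := by
    intro a ha
    have haB : a ∈ Bᶜ := fun hb => by
      have : a ∈ A ∩ B := ⟨ha, hb⟩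
      simp [hAB] at this
    exact mem_open_qball ρ' htri' hB.isOpen_compl a haB
  have hBball : ∀ b ∈ B, ∃ r > 0, qball ρ b r ⊆ Aᶜ := by
    intro b hb
    have hbA : b ∈ Aᶜ := fun ha => by
      have : b ∈ A ∩ B := ⟨ha, hb⟩
      simp [hAB] at this
    exact mem_open_qball ρ htri hA.isOpen_compl b hbA
  choose! r hrpos hrB using hAball
  choose! s hspos hsA using hBball
  refine ⟨⋃ a ∈ A, qball ρ' a (r a / 2), ⋃ b ∈ B, qball ρ b (s b / 2),
    (by letI := qtop ρ'; exact isOpen_biUnion fun a ha => qball_open ρ' a (by linarith [hrpos a ha])),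
    (by letI := qtop ρ; exact isOpen_biUnion fun b hb => qball_open ρ b (by linarith [hspos b hb])),
    fun a ha => Set.mem_biUnion ha (by
      simp [qball, hρ', hzero]; linarith [hrpos a ha]),
    fun b hb => Set.mem_biUnion hb (by
      simp [qball, hzero]; linarith [hspos b hb]), ?_⟩
  ext x
  simp only [Set.mem_inter_iff, Set.mem_iUnion, Set.mem_empty_iff_false, iff_false]
  rintro ⟨⟨a, ha, hxa⟩, ⟨b, hb, hxb⟩⟩
  simp only [qball, Set.mem_setOf_eq, hρ'] at hxa hxb
  have hba : ρ b a ≤ ρ b x + ρ x a := htri b x a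
  rcases le_total (r a) (s b) with h | h
  · exact hsA b hb (show a ∈ qball ρ b (s b) by simp only [qball, Set.mem_setOf_eq]; linarith) ha
  · exact hrB a ha (show b ∈ qball ρ' a (r a) by simp only [qball, Set.mem_setOf_eq, hρ']; linarith) hb
end

section
/- In the asymmetric normed space $(\mathbb{R}, u)$ where $u(\alpha) = \max\{\alpha, 0\}$, multiplication of scalars is not continuous at any point: the map $(\alpha,\beta) \mapsto \alpha\beta$ from $(\mathbb{R},\tau_u) \times (\mathbb{R},\tau_u)$ to $(\mathbb{R},\tau_u)$ fails to be continuous at every point of $\mathbb{R} \times \mathbb{R}$. -/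
theorem stmt_8 (a b : ℝ) :
    ¬ @ContinuousAt (ℝ × ℝ) ℝ
        (@instTopologicalSpaceProd ℝ ℝ (qtop fun x y : ℝ => max (y - x) 0)
          (qtop fun x y : ℝ => max (y - x) 0))
        (qtop fun x y : ℝ => max (y - x) 0)
        (fun p => p.1 * p.2) (a, b) := by
  set ρ : ℝ → ℝ → ℝ := fun x y => max (y - x) 0 with hρ
  letI : TopologicalSpace ℝ := qtop ρ
  intro h
  -- every open set is a lower set
  have hlow : ∀ U : Set ℝ, IsOpen U → ∀ x ∈ U, ∀ y ≤ x, y ∈ U := by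
    intro U hU
    induction hU with
    | basic s hs =>
        obtain ⟨x, r, hr, rfl⟩ := hs
        intro z hz y hy
        simp only [qball, Set.mem_setOf_eq, hρ] at *
        exact lt_of_le_of_lt (max_le_max (sub_le_sub_right hy x) le_rfl) hz
    | univ => intro x _ y _; trivial
    | inter s t _ _ ihs iht => intro x hx y hy; exact ⟨ihs x hx.1 y hy, iht x hx.2 y hy⟩
    | sUnion S _ ih => rintro x ⟨s, hs, hx⟩ y hy; exact ⟨s, hs, ih s hs x hx y hy⟩
  set S : Set ℝ := qball ρ (a * b) 1 with hS
  have hS_open : IsOpen S :=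
    TopologicalSpace.isOpen_generateFrom_of_mem ⟨a * b, 1, one_pos, rfl⟩
  have hS_mem : S ∈ nhds (a * b) := hS_open.mem_nhds (by simp [hS, qball, hρ])
  have hpre : (fun p : ℝ × ℝ => p.1 * p.2) ⁻¹' S ∈ nhds (a, b) := h hS_mem
  rw [mem_nhds_prod_iff] at hpre
  obtain ⟨u, hu, v, hv, huv⟩ := hpre
  obtain ⟨tu, htu_sub, htu_open, ha_tu⟩ := mem_nhds_iff.mp hu
  obtain ⟨tv, htv_sub, htv_open, hb_tv⟩ := mem_nhds_iff.mp hv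
  set t : ℝ := -(|a| + |b| + 2) with ht
  have hta : t ≤ a := by have := neg_abs_le a; have := abs_nonneg b; linarith
  have htb : t ≤ b := by have := neg_abs_le b; have := abs_nonneg a; linarith
  have htu : t ∈ u := htu_sub (hlow tu htu_open a ha_tu t hta)
  have htv : t ∈ v := htv_sub (hlow tv htv_open b hb_tv t htb)
  have : (t, t) ∈ u ×ˢ v := ⟨htu, htv⟩
  have hmem : t * t ∈ S := huv this
  simp only [hS, qball, hρ, Set.mem_setOf_eq] at hmem
  have h1 : t * t - a * b < 1 := lt_of_le_of_lt (le_max_left _ _) hmem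
  have hab : a * b ≤ |a| * |b| := by
    calc a * b ≤ |a * b| := le_abs_self _
    _ = |a| * |b| := abs_mul a b
  have h0a := abs_nonneg a
  have h0b := abs_nonneg b
  nlinarith [sq_nonneg (|a| + |b|), sq_nonneg (|a| - |b|)]
end
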